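/- Let h : (0,1)² → (0,1) be a measurable function such that h(Ψ_u, Ψ_v) is uniformly distributed on (0,1) whenever Ψ_u, Ψ_v are independent uniforms on (0,1). Let Ψ_u, Ψ_v, η be independent random variables each uniformly distributed on (0,1), and let σ ≥ 0. Then the random variable H(Ψ_u, Ψ_v, η) = Φ₁( (1/√(1+σ²)) Φ₁^{-1}(h(Ψ_u, Ψ_v)) + (σ/√(1+σ²)) Φ₁^{-1}(η) ) is uniformly distributed on (0,1); that is, H is a 3-dimensional H-function. -/

import Mathlib

open MeasureTheory ProbabilityTheory

/-- The uniform distribution on the interval `(0,1)`. -/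
noncomputable def unifOI : Measure ℝ := volume.restrict (Set.Ioo (0:ℝ) 1)

/-- `gaussCDF v x = Φ_{v}(x)`, the CDF of the centered Gaussian with variance `v`. -/
noncomputable def gaussCDF (v : NNReal) (x : ℝ) : ℝ := ((gaussianReal 0 v) (Set.Iic x)).toReal

/-- The (generalized) inverse CDF of the centered Gaussian with variance `v`. -/
noncomputable def gaussCDFInv (v : NNReal) (p : ℝ) : ℝ := sInf {x : ℝ | p ≤ gaussCDF v x}

/-- `h : (0,1)² → (0,1)` outputs a uniform random variable whenever its two inputs are
independent uniform random variables on `(0,1)`. -/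
def UniformOutput (h : ℝ → ℝ → ℝ) : Prop :=
  ∀ (Ω : Type) (_ : MeasurableSpace Ω) (Pr : Measure Ω), IsProbabilityMeasure Pr →
    ∀ X Y : Ω → ℝ, Measurable X → Measurable Y → IndepFun X Y Pr →
      Measure.map X Pr = unifOI → Measure.map Y Pr = unifOI →
      Measure.map (fun ω => h (X ω) (Y ω)) Pr = unifOI

/-!
The quantile transform turns the independent uniforms `h(Ψu, Ψv)` and `η` into independent
standard normals `X` and `Y`. With `a = 1/√(1+σ²)` and `b = σ/√(1+σ²)` we have `a² + b² = 1`, so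
`aX + bY` is again standard normal, and the probability integral transform `Φ₁` maps it back to a
uniform. Both transforms work for any law on `ℝ` whose cdf is continuous and strictly increasing:
such a cdf is a bijection of `ℝ` onto `(0,1)`, inverted by the quantile function.
-/

open Set Filter

instance isProbabilityMeasure_unifOI : IsProbabilityMeasure unifOI :=
  ⟨by rw [unifOI, Measure.restrict_apply_univ, Real.volume_Ioo]; norm_num⟩

namespace ProbabilityTheory

variable {μ : Measure ℝ}

lemma continuous_cdf [IsProbabilityMeasure μ] [NullSingletonClass μ] : Continuous (cdf μ) := by
  refine continuous_iff_continuousAt.2 fun x =>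
    continuousAt_iff_continuous_left_right.2 ⟨?_, (cdf μ).right_continuous x⟩
  rw [← continuousWithinAt_Iio_iff_Iic, (monotone_cdf μ).continuousWithinAt_Iio_iff_leftLim_eq]
  have hx := (cdf μ).measure_singleton x
  rw [measure_cdf, measure_singleton, eq_comm, ENNReal.ofReal_eq_zero, sub_nonpos] at hx
  exact le_antisymm ((monotone_cdf μ).leftLim_le le_rfl) hx

lemma strictMono_cdf_of_absolutelyContinuous [IsProbabilityMeasure μ] (hμ : volume ≪ μ) :
    StrictMono (cdf μ) := by
  intro x y hxy
  have hpos : μ (Ioc x y) ≠ 0 := fun h0 => hxy.not_ge (by simpa using hμ h0)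
  rw [← measure_cdf (μ := μ), StieltjesFunction.measure_Ioc, Ne, ENNReal.ofReal_eq_zero,
    not_le, sub_pos] at hpos
  exact hpos

lemma cdf_mem_Ioo (hs : StrictMono (cdf μ)) (x : ℝ) : cdf μ x ∈ Ioo 0 1 :=
  ⟨(cdf_nonneg μ (x - 1)).trans_lt (hs (by linarith)),
    (hs (lt_add_one x)).trans_le (cdf_le_one μ _)⟩

lemma range_cdf (hc : Continuous (cdf μ)) (hs : StrictMono (cdf μ)) :
    range (cdf μ) = Ioo 0 1 := by
  refine (range_subset_iff.2 (cdf_mem_Ioo hs)).antisymm fun p ⟨hp0, hp1⟩ => ?_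
  obtain ⟨a, ha⟩ := ((tendsto_cdf_atBot μ).eventually_lt_const hp0).exists
  obtain ⟨b, hb⟩ := ((tendsto_cdf_atTop μ).eventually_const_lt hp1).exists
  exact intermediate_value_univ a b hc ⟨ha.le, hb.le⟩

noncomputable def quantile (μ : Measure ℝ) (p : ℝ) : ℝ := sInf {x | p ≤ cdf μ x}

lemma quantile_cdf (hs : StrictMono (cdf μ)) (x : ℝ) : quantile μ (cdf μ x) = x := by
  simp only [quantile, hs.le_iff_le]
  exact csInf_Ici

lemma quantile_of_notMem_Ioo (hs : StrictMono (cdf μ)) {p : ℝ} (hp : p ∉ Ioo 0 1) :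
    quantile μ p = 0 := by
  rcases not_and_or.1 hp with hp0 | hp1
  · have huniv : {x | p ≤ cdf μ x} = univ :=
      eq_univ_of_forall fun x => (not_lt.1 hp0).trans (cdf_mem_Ioo hs x).1.le
    rw [quantile, huniv, Real.sInf_of_not_bddBelow not_bddBelow_univ]
  · have hempty : {x | p ≤ cdf μ x} = ∅ :=
      eq_empty_of_forall_notMem fun x =>
        not_le.2 ((cdf_mem_Ioo hs x).2.trans_le (not_lt.1 hp1))
    rw [quantile, hempty, Real.sInf_empty]

lemma cdf_quantile (hc : Continuous (cdf μ)) (hs : StrictMono (cdf μ)) {p : ℝ}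
    (hp : p ∈ Ioo 0 1) : cdf μ (quantile μ p) = p := by
  obtain ⟨x, rfl⟩ := (range_cdf hc hs).symm ▸ hp
  rw [quantile_cdf hs]

lemma quantile_le_iff (hc : Continuous (cdf μ)) (hs : StrictMono (cdf μ)) {p : ℝ}
    (hp : p ∈ Ioo 0 1) (t : ℝ) : quantile μ p ≤ t ↔ p ≤ cdf μ t := by
  rw [← hs.le_iff_le, cdf_quantile hc hs hp]

lemma measurable_quantile (hc : Continuous (cdf μ)) (hs : StrictMono (cdf μ)) :
    Measurable (quantile μ) := by
  have hext : quantile μ = Function.extend (cdf μ) id 0 := by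
    funext p
    by_cases hp : p ∈ range (cdf μ)
    · obtain ⟨x, rfl⟩ := hp
      rw [hs.injective.extend_apply, quantile_cdf hs, id]
    · rw [Function.extend_apply' _ _ _ (by simpa using hp), quantile_of_notMem_Ioo hs
        (by rwa [range_cdf hc hs] at hp), Pi.zero_apply]
  rw [hext]
  exact (hc.measurableEmbedding hs.injective).measurable_extend measurable_id measurable_const

lemma map_quantile_unifOI [IsProbabilityMeasure μ] (hc : Continuous (cdf μ))
    (hs : StrictMono (cdf μ)) : unifOI.map (quantile μ) = μ := by
  have hq := measurable_quantile hc hs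
  have : IsProbabilityMeasure (unifOI.map (quantile μ)) :=
    Measure.isProbabilityMeasure_map hq.aemeasurable
  refine Measure.eq_of_cdf _ _ (StieltjesFunction.ext fun t => ?_)
  have hpre : quantile μ ⁻¹' Iic t ∩ Ioo 0 1 = Ioc 0 (cdf μ t) := by
    ext p
    simp only [mem_inter_iff, mem_preimage, mem_Iic, mem_Ioc]
    constructor
    · rintro ⟨hle, hp⟩
      exact ⟨hp.1, (quantile_le_iff hc hs hp t).1 hle⟩
    · rintro ⟨hp0, hle⟩
      have hp : p ∈ Ioo 0 1 := ⟨hp0, hle.trans_lt (cdf_mem_Ioo hs t).2⟩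
      exact ⟨(quantile_le_iff hc hs hp t).2 hle, hp⟩
  rw [cdf_eq_real, measureReal_def, Measure.map_apply hq measurableSet_Iic, unifOI,
    Measure.restrict_apply (hq measurableSet_Iic), hpre, Real.volume_Ioc, sub_zero,
    ENNReal.toReal_ofReal (cdf_nonneg μ t)]

lemma map_cdf [IsProbabilityMeasure μ] (hc : Continuous (cdf μ)) (hs : StrictMono (cdf μ)) :
    μ.map (cdf μ) = unifOI := by
  calc μ.map (cdf μ) = (unifOI.map (quantile μ)).map (cdf μ) := by rw [map_quantile_unifOI hc hs]
    _ = unifOI.map (cdf μ ∘ quantile μ) := Measure.map_map hc.measurable (measurable_quantile hc hs)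
    _ = unifOI := (Measure.map_congr ?_).trans Measure.map_id
  filter_upwards [ae_restrict_mem measurableSet_Ioo] with p hp using cdf_quantile hc hs hp

end ProbabilityTheory

section Gaussian

variable {v : NNReal}

lemma gaussCDF_eq_cdf : gaussCDF v = cdf (gaussianReal 0 v) :=
  funext fun x => (cdf_eq_real _ x).symm

lemma gaussCDFInv_eq_quantile : gaussCDFInv v = quantile (gaussianReal 0 v) := by
  funext p
  simp only [gaussCDFInv, quantile, gaussCDF_eq_cdf]

lemma measurable_gaussCDF : Measurable (gaussCDF v) := by
  rw [gaussCDF_eq_cdf]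
  exact (monotone_cdf _).measurable

lemma continuous_cdf_gaussianReal (m : ℝ) (hv : v ≠ 0) : Continuous (cdf (gaussianReal m v)) :=
  have := nullSingletonClass_gaussianReal (μ := m) hv
  continuous_cdf

lemma strictMono_cdf_gaussianReal (m : ℝ) (hv : v ≠ 0) : StrictMono (cdf (gaussianReal m v)) :=
  strictMono_cdf_of_absolutelyContinuous (gaussianReal_absolutelyContinuous' m hv)

lemma measurable_gaussCDFInv (hv : v ≠ 0) : Measurable (gaussCDFInv v) := by
  rw [gaussCDFInv_eq_quantile]
  exact measurable_quantile (continuous_cdf_gaussianReal 0 hv) (strictMono_cdf_gaussianReal 0 hv)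

lemma map_gaussCDF (hv : v ≠ 0) : (gaussianReal 0 v).map (gaussCDF v) = unifOI := by
  rw [gaussCDF_eq_cdf]
  exact map_cdf (continuous_cdf_gaussianReal 0 hv) (strictMono_cdf_gaussianReal 0 hv)

lemma map_gaussCDFInv_comp {Ω : Type*} [MeasurableSpace Ω] {P : Measure Ω} {U : Ω → ℝ}
    (hU : Measurable U) (hUlaw : P.map U = unifOI) (hv : v ≠ 0) :
    P.map (fun ω => gaussCDFInv v (U ω)) = gaussianReal 0 v := by
  rw [← Function.comp_def, ← Measure.map_map (measurable_gaussCDFInv hv) hU, hUlaw,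
    gaussCDFInv_eq_quantile]
  exact map_quantile_unifOI (continuous_cdf_gaussianReal 0 hv) (strictMono_cdf_gaussianReal 0 hv)

end Gaussian

lemma gaussianReal_const_mul_add_const_mul_of_indepFun {Ω : Type*} [MeasurableSpace Ω]
    {P : Measure Ω} {X Y : Ω → ℝ} (hX : Measurable X) (hY : Measurable Y) (hXY : IndepFun X Y P)
    {m₁ m₂ : ℝ} {v₁ v₂ : NNReal} (hXlaw : P.map X = gaussianReal m₁ v₁)
    (hYlaw : P.map Y = gaussianReal m₂ v₂) (a b : ℝ) :
    P.map (fun ω => a * X ω + b * Y ω) =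
      gaussianReal (a * m₁ + b * m₂)
        (.mk (a ^ 2) (sq_nonneg a) * v₁ + .mk (b ^ 2) (sq_nonneg b) * v₂) := by
  have hlaw : ∀ {Z : Ω → ℝ} {m : ℝ} {w : NNReal}, Measurable Z → P.map Z = gaussianReal m w →
      ∀ c : ℝ, P.map (fun ω => c * Z ω) = gaussianReal (c * m) (.mk (c ^ 2) (sq_nonneg c) * w) :=
    fun hZ hZlaw c => by
      rw [← Function.comp_def (c * ·), ← Measure.map_map (measurable_const_mul c) hZ, hZlaw,
        gaussianReal_map_const_mul]
  exact gaussianReal_add_gaussianReal_of_indepFun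
    (hXY.comp (measurable_const_mul a) (measurable_const_mul b)) (hlaw hX hXlaw a) (hlaw hY hYlaw b)

theorem stmt_11_general (h : ℝ → ℝ → ℝ)
    (hhmeas : Measurable (fun p : ℝ × ℝ => h p.1 p.2))
    (hh : UniformOutput h)
    {Ω : Type} [MeasurableSpace Ω] (Pr : Measure Ω) [IsProbabilityMeasure Pr]
    (Ψu Ψv η : Ω → ℝ)
    (hΨu : Measurable Ψu) (hΨv : Measurable Ψv) (hη : Measurable η)
    (hIndep : iIndepFun ![Ψu, Ψv, η] Pr)
    (hu : Measure.map Ψu Pr = unifOI) (hv : Measure.map Ψv Pr = unifOI)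
    (hη' : Measure.map η Pr = unifOI)
    (σ : ℝ) :
    Measure.map (fun ω =>
        gaussCDF 1 ((1 / Real.sqrt (1 + σ ^ 2)) * gaussCDFInv 1 (h (Ψu ω) (Ψv ω))
          + (σ / Real.sqrt (1 + σ ^ 2)) * gaussCDFInv 1 (η ω))) Pr = unifOI := by
  set a := 1 / Real.sqrt (1 + σ ^ 2)
  set b := σ / Real.sqrt (1 + σ ^ 2)
  have hab : (.mk (a ^ 2) (sq_nonneg a) * 1 + .mk (b ^ 2) (sq_nonneg b) * 1 : NNReal) = 1 := by
    ext
    simp only [a, b, NNReal.coe_add, NNReal.coe_mk, NNReal.coe_one, mul_one, div_pow,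
      Real.sq_sqrt (by positivity : (0 : ℝ) ≤ 1 + σ ^ 2)]
    field_simp
  set Z : Ω → ℝ := fun ω => h (Ψu ω) (Ψv ω)
  have hZ : Measurable Z := hhmeas.comp (hΨu.prodMk hΨv)
  have hUV : IndepFun Ψu Ψv Pr := by simpa using hIndep.indepFun (i := 0) (j := 1) (by decide)
  have hZη : IndepFun Z η Pr := by
    have hmeas : ∀ i, Measurable (![Ψu, Ψv, η] i) := fun i => by fin_cases i <;> assumption
    exact (hIndep.indepFun_prodMk hmeas 0 1 2 (by decide) (by decide)).comp hhmeas measurable_id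
  have hX : Measurable fun ω => gaussCDFInv 1 (Z ω) := (measurable_gaussCDFInv one_ne_zero).comp hZ
  have hY : Measurable fun ω => gaussCDFInv 1 (η ω) := (measurable_gaussCDFInv one_ne_zero).comp hη
  have hsum := gaussianReal_const_mul_add_const_mul_of_indepFun hX hY
    (hZη.comp (measurable_gaussCDFInv one_ne_zero) (measurable_gaussCDFInv one_ne_zero))
    (map_gaussCDFInv_comp hZ (hh Ω _ Pr inferInstance Ψu Ψv hΨu hΨv hUV hu hv) one_ne_zero)
    (map_gaussCDFInv_comp hη hη' one_ne_zero) a b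
  rw [mul_zero, mul_zero, add_zero, hab] at hsum
  have hH : Measurable fun ω => a * gaussCDFInv 1 (Z ω) + b * gaussCDFInv 1 (η ω) := by fun_prop
  rw [← Function.comp_def (gaussCDF 1), ← Measure.map_map measurable_gaussCDF hH, hsum,
    map_gaussCDF one_ne_zero]

/-- If `h(Ψu,Ψv)` is uniform for independent uniforms, and `Ψu, Ψv, η`
are independent uniform random variables on `(0,1)` and `σ ≥ 0`, then
`H(Ψu,Ψv,η) = Φ₁((1/√(1+σ²)) Φ₁⁻¹(h(Ψu,Ψv)) + (σ/√(1+σ²)) Φ₁⁻¹(η))`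
is uniformly distributed on `(0,1)`; that is, `H` is a 3-dimensional H-function. -/
theorem stmt_11 (h : ℝ → ℝ → ℝ)
    (hhmeas : Measurable (fun p : ℝ × ℝ => h p.1 p.2))
    (hh : UniformOutput h)
    {Ω : Type} [MeasurableSpace Ω] (Pr : Measure Ω) [IsProbabilityMeasure Pr]
    (Ψu Ψv η : Ω → ℝ)
    (hΨu : Measurable Ψu) (hΨv : Measurable Ψv) (hη : Measurable η)
    (hIndep : iIndepFun ![Ψu, Ψv, η] Pr)
    (hu : Measure.map Ψu Pr = unifOI) (hv : Measure.map Ψv Pr = unifOI)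
    (hη' : Measure.map η Pr = unifOI)
    (σ : ℝ) (hσ : 0 ≤ σ) :
    Measure.map (fun ω =>
        gaussCDF 1 ((1 / Real.sqrt (1 + σ ^ 2)) * gaussCDFInv 1 (h (Ψu ω) (Ψv ω))
          + (σ / Real.sqrt (1 + σ ^ 2)) * gaussCDFInv 1 (η ω))) Pr = unifOI :=
  stmt_11_general h hhmeas hh Pr Ψu Ψv η hΨu hΨv hη hIndep hu hv hη' σ
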